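/- For every n ≥ 1 there exists an indecomposable representation M of Q with dimension vector (n, n, n, n+1) together with a short exact sequence of representations 0 → P₄ⁿ⁻¹ → P₁ⁿ → M → 0 (for n = 2 this is the preprojective module with dimension vector (2,2,2,3) considered in the paper). -/

import Mathlib

variable (k : Type) [Field k]

/-- A finite-dimensional representation of the quiver `Q` with vertices `1,2,3,4`
and arrows `a : 1 → 2`, `b : 1 → 3`, `c : 2 → 4`, `d : 3 → 4`. -/
structure QRep where
  V1 : Type
  V2 : Type
  V3 : Type
  V4 : Type
  [acg1 : AddCommGroup V1]
  [acg2 : AddCommGroup V2]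
  [acg3 : AddCommGroup V3]
  [acg4 : AddCommGroup V4]
  [mod1 : Module k V1]
  [mod2 : Module k V2]
  [mod3 : Module k V3]
  [mod4 : Module k V4]
  [fin1 : FiniteDimensional k V1]
  [fin2 : FiniteDimensional k V2]
  [fin3 : FiniteDimensional k V3]
  [fin4 : FiniteDimensional k V4]
  ma : V1 →ₗ[k] V2
  mb : V1 →ₗ[k] V3
  mc : V2 →ₗ[k] V4
  md : V3 →ₗ[k] V4

attribute [instance] QRep.acg1 QRep.acg2 QRep.acg3 QRep.acg4
  QRep.mod1 QRep.mod2 QRep.mod3 QRep.mod4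
  QRep.fin1 QRep.fin2 QRep.fin3 QRep.fin4

variable {k}

/-- Morphisms of representations of `Q`. -/
@[ext]
structure QHom (M N : QRep k) where
  f1 : M.V1 →ₗ[k] N.V1
  f2 : M.V2 →ₗ[k] N.V2
  f3 : M.V3 →ₗ[k] N.V3
  f4 : M.V4 →ₗ[k] N.V4
  comm_a : f2 ∘ₗ M.ma = N.ma ∘ₗ f1
  comm_b : f3 ∘ₗ M.mb = N.mb ∘ₗ f1
  comm_c : f4 ∘ₗ M.mc = N.mc ∘ₗ f2
  comm_d : f4 ∘ₗ M.md = N.md ∘ₗ f3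

/-- Two representations are isomorphic iff there is a morphism all of whose
components are bijective. -/
def QIso (M N : QRep k) : Prop :=
  ∃ f : QHom M N, Function.Bijective f.f1 ∧ Function.Bijective f.f2 ∧
    Function.Bijective f.f3 ∧ Function.Bijective f.f4

/-- The zero representation(s). -/
def QRep.IsZeroRep (M : QRep k) : Prop :=
  Subsingleton M.V1 ∧ Subsingleton M.V2 ∧ Subsingleton M.V3 ∧ Subsingleton M.V4

/-- Vertexwise direct sum of representations. -/
def QRep.dsum (M N : QRep k) : QRep k where
  V1 := M.V1 × N.V1
  V2 := M.V2 × N.V2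
  V3 := M.V3 × N.V3
  V4 := M.V4 × N.V4
  ma := M.ma.prodMap N.ma
  mb := M.mb.prodMap N.mb
  mc := M.mc.prodMap N.mc
  md := M.md.prodMap N.md

/-- Direct sum of `n` copies of a representation. -/
def QRep.dpow (M : QRep k) (n : ℕ) : QRep k where
  V1 := Fin n → M.V1
  V2 := Fin n → M.V2
  V3 := Fin n → M.V3
  V4 := Fin n → M.V4
  ma := M.ma.compLeft (Fin n)
  mb := M.mb.compLeft (Fin n)
  mc := M.mc.compLeft (Fin n)
  md := M.md.compLeft (Fin n)

/-- A representation is indecomposable if it is nonzero and not isomorphic to a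
direct sum of two nonzero representations. -/
def QRep.Indecomposable (M : QRep k) : Prop :=
  ¬ M.IsZeroRep ∧ ∀ A B : QRep k, QIso M (A.dsum B) → A.IsZeroRep ∨ B.IsZeroRep

/-- `0 → A → B → C → 0` is short exact (vertexwise). -/
def QShortExact {A B C : QRep k} (f : QHom A B) (g : QHom B C) : Prop :=
  (Function.Injective f.f1 ∧ Function.Injective f.f2 ∧
    Function.Injective f.f3 ∧ Function.Injective f.f4) ∧
  (Function.Surjective g.f1 ∧ Function.Surjective g.f2 ∧
    Function.Surjective g.f3 ∧ Function.Surjective g.f4) ∧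
  (LinearMap.range f.f1 = LinearMap.ker g.f1 ∧ LinearMap.range f.f2 = LinearMap.ker g.f2 ∧
    LinearMap.range f.f3 = LinearMap.ker g.f3 ∧ LinearMap.range f.f4 = LinearMap.ker g.f4)

variable (k)

/-- The `n×n` Jordan block with eigenvalue `lam`, as a linear endomorphism of `kⁿ`. -/
def jordan (n : ℕ) (lam : k) : (Fin n → k) →ₗ[k] (Fin n → k) :=
  Matrix.mulVecLin (Matrix.of fun i j : Fin n =>
    if i = j then lam else if (i : ℕ) + 1 = (j : ℕ) then 1 else 0)

/-- The representation `M_n(λ) = (kⁿ,kⁿ,kⁿ,kⁿ; id,id,id,J_n(λ))`. -/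
def Mlam (n : ℕ) (lam : k) : QRep k where
  V1 := Fin n → k
  V2 := Fin n → k
  V3 := Fin n → k
  V4 := Fin n → k
  ma := LinearMap.id
  mb := LinearMap.id
  mc := LinearMap.id
  md := jordan k n lam

/-- The indecomposable projective `P₁ = (k,k,k,k²)`. -/
def P1 : QRep k where
  V1 := k
  V2 := k
  V3 := k
  V4 := k × k
  ma := LinearMap.id
  mb := LinearMap.id
  mc := LinearMap.inl k k k
  md := LinearMap.inr k k k

/-- The indecomposable projective `P₂ = (0,k,0,k)`. -/
def P2 : QRep k where
  V1 := Fin 0 → k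
  V2 := k
  V3 := Fin 0 → k
  V4 := k
  ma := 0
  mb := 0
  mc := LinearMap.id
  md := 0

/-- The indecomposable projective `P₃ = (0,0,k,k)`. -/
def P3 : QRep k where
  V1 := Fin 0 → k
  V2 := Fin 0 → k
  V3 := k
  V4 := k
  ma := 0
  mb := 0
  mc := 0
  md := LinearMap.id

/-- The indecomposable projective `P₄ = (0,0,0,k)`. -/
def P4 : QRep k where
  V1 := Fin 0 → k
  V2 := Fin 0 → k
  V3 := Fin 0 → k
  V4 := k
  ma := 0
  mb := 0
  mc := 0
  md := 0

/-! The representation `M = (kⁿ, kⁿ, kⁿ, kⁿ⁺¹; id, id, x ↦ (x, 0), x ↦ (0, x))` is a brick: an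
endomorphism is a pair `(φ, ψ)` with `ψ (x, 0) = (φ x, 0)` and `ψ (0, x) = (0, φ x)`, so the
matrix of `ψ` is constant along its diagonals, and its first and last rows vanish off the
diagonal; hence `ψ` and `φ` are scalar. A brick is indecomposable, because the projection onto a
summand of a decomposition is then a scalar, i.e. `0` or `1`.

At vertex `4` the projective cover `P₁ⁿ → M` is `(x, y) ↦ (x, 0) + (0, y)`, which kills
`((0, w), -(w, 0))` for `w ∈ kⁿ⁻¹`; this embeds `P₄ⁿ⁻¹`, and exactness follows by counting
dimensions: `(n - 1) + (n + 1) = 2n`. -/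

variable {k}

section LinearAlgebra

variable {U V W V' W' : Type*} [AddCommGroup U] [AddCommGroup V] [AddCommGroup W]
  [AddCommGroup V'] [AddCommGroup W'] [Module k U] [Module k V] [Module k W] [Module k V']
  [Module k W']

lemma LinearEquiv.symm_comp_eq_comp_symm (e₁ : V ≃ₗ[k] V') (e₂ : W ≃ₗ[k] W') {m : V →ₗ[k] W}
    {m' : V' →ₗ[k] W'} (h : ∀ x, e₂ (m x) = m' (e₁ x)) :
    e₂.symm.toLinearMap ∘ₗ m' = m ∘ₗ e₁.symm.toLinearMap := by
  ext x
  apply e₂.injective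
  simp [h]

lemma LinearMap.eq_smul_id_of_symm_comp_comp_eq {f : V →ₗ[k] W} (hf : Function.Bijective f)
    {g : W →ₗ[k] W} {c : k}
    (h : (LinearEquiv.ofBijective f hf).symm.toLinearMap ∘ₗ g ∘ₗ f = c • LinearMap.id) :
    g = c • LinearMap.id := by
  ext w
  obtain ⟨v, rfl⟩ := hf.2 w
  simpa using congrArg (LinearEquiv.ofBijective f hf) (LinearMap.congr_fun h v)

lemma subsingleton_of_prodMap_id_zero_eq_smul {c : k}
    (h : (LinearMap.id : V →ₗ[k] V).prodMap (0 : W →ₗ[k] W) = c • LinearMap.id) :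
    (c = 1 → Subsingleton W) ∧ (c ≠ 1 → Subsingleton V) := by
  have hvw : ∀ v w, (v, (0 : W)) = c • (v, w) := fun v w => LinearMap.congr_fun h (v, w)
  refine ⟨fun hc => subsingleton_of_forall_eq 0 fun w => ?_,
    fun hc => subsingleton_of_forall_eq 0 fun v => ?_⟩
  · simpa [hc] using (congrArg Prod.snd (hvw 0 w)).symm
  · have hv : (1 - c) • v = 0 := by
      rw [sub_smul, one_smul, sub_eq_zero]
      exact congrArg Prod.fst (hvw v 0)
    exact (smul_eq_zero.mp hv).resolve_left (sub_ne_zero.mpr (Ne.symm hc))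

lemma LinearMap.range_eq_ker_of_finrank_eq [FiniteDimensional k V] {f : U →ₗ[k] V}
    {g : V →ₗ[k] W} (hf : Function.Injective f) (hg : Function.Surjective g) (hgf : g ∘ₗ f = 0)
    (hdim : Module.finrank k U + Module.finrank k W = Module.finrank k V) :
    LinearMap.range f = LinearMap.ker g := by
  refine Submodule.eq_of_le_of_finrank_eq (LinearMap.range_le_ker_iff.mpr hgf) ?_
  have := LinearMap.finrank_range_add_finrank_ker g
  rw [LinearMap.range_eq_top.mpr hg, finrank_top] at this
  rw [LinearMap.finrank_range_of_inj hf]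
  omega

end LinearAlgebra

namespace QHom

variable {L M N : QRep k}

def comp (g : QHom M N) (f : QHom L M) : QHom L N where
  f1 := g.f1 ∘ₗ f.f1
  f2 := g.f2 ∘ₗ f.f2
  f3 := g.f3 ∘ₗ f.f3
  f4 := g.f4 ∘ₗ f.f4
  comm_a := by rw [LinearMap.comp_assoc, f.comm_a, ← LinearMap.comp_assoc, g.comm_a,
    LinearMap.comp_assoc]
  comm_b := by rw [LinearMap.comp_assoc, f.comm_b, ← LinearMap.comp_assoc, g.comm_b,
    LinearMap.comp_assoc]
  comm_c := by rw [LinearMap.comp_assoc, f.comm_c, ← LinearMap.comp_assoc, g.comm_c,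
    LinearMap.comp_assoc]
  comm_d := by rw [LinearMap.comp_assoc, f.comm_d, ← LinearMap.comp_assoc, g.comm_d,
    LinearMap.comp_assoc]

noncomputable def inv (f : QHom M N) (h1 : Function.Bijective f.f1)
    (h2 : Function.Bijective f.f2) (h3 : Function.Bijective f.f3)
    (h4 : Function.Bijective f.f4) : QHom N M where
  f1 := (LinearEquiv.ofBijective f.f1 h1).symm
  f2 := (LinearEquiv.ofBijective f.f2 h2).symm
  f3 := (LinearEquiv.ofBijective f.f3 h3).symm
  f4 := (LinearEquiv.ofBijective f.f4 h4).symm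
  comm_a := LinearEquiv.symm_comp_eq_comp_symm _ _ (LinearMap.congr_fun f.comm_a)
  comm_b := LinearEquiv.symm_comp_eq_comp_symm _ _ (LinearMap.congr_fun f.comm_b)
  comm_c := LinearEquiv.symm_comp_eq_comp_symm _ _ (LinearMap.congr_fun f.comm_c)
  comm_d := LinearEquiv.symm_comp_eq_comp_symm _ _ (LinearMap.congr_fun f.comm_d)

variable (M) in
def scalar (c : k) : QHom M M where
  f1 := c • LinearMap.id
  f2 := c • LinearMap.id
  f3 := c • LinearMap.id
  f4 := c • LinearMap.id
  comm_a := by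
    rw [LinearMap.smul_comp, LinearMap.comp_smul, LinearMap.id_comp, LinearMap.comp_id]
  comm_b := by
    rw [LinearMap.smul_comp, LinearMap.comp_smul, LinearMap.id_comp, LinearMap.comp_id]
  comm_c := by
    rw [LinearMap.smul_comp, LinearMap.comp_smul, LinearMap.id_comp, LinearMap.comp_id]
  comm_d := by
    rw [LinearMap.smul_comp, LinearMap.comp_smul, LinearMap.id_comp, LinearMap.comp_id]

def projFst (A B : QRep k) : QHom (A.dsum B) (A.dsum B) where
  f1 := LinearMap.id.prodMap 0
  f2 := LinearMap.id.prodMap 0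
  f3 := LinearMap.id.prodMap 0
  f4 := LinearMap.id.prodMap 0
  comm_a := LinearMap.ext fun _ => Prod.ext rfl (map_zero B.ma).symm
  comm_b := LinearMap.ext fun _ => Prod.ext rfl (map_zero B.mb).symm
  comm_c := LinearMap.ext fun _ => Prod.ext rfl (map_zero B.mc).symm
  comm_d := LinearMap.ext fun _ => Prod.ext rfl (map_zero B.md).symm

end QHom

def QRep.IsBrick (M : QRep k) : Prop :=
  ∀ f : QHom M M, ∃ c : k, f = QHom.scalar M c

namespace QRep.IsBrick

lemma of_bijective {M N : QRep k} (hM : M.IsBrick) (f : QHom M N)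
    (h1 : Function.Bijective f.f1) (h2 : Function.Bijective f.f2)
    (h3 : Function.Bijective f.f3) (h4 : Function.Bijective f.f4) : N.IsBrick := by
  intro g
  obtain ⟨c, hc⟩ := hM ((f.inv h1 h2 h3 h4).comp (g.comp f))
  exact ⟨c, QHom.ext (LinearMap.eq_smul_id_of_symm_comp_comp_eq h1 (congrArg QHom.f1 hc))
    (LinearMap.eq_smul_id_of_symm_comp_comp_eq h2 (congrArg QHom.f2 hc))
    (LinearMap.eq_smul_id_of_symm_comp_comp_eq h3 (congrArg QHom.f3 hc))
    (LinearMap.eq_smul_id_of_symm_comp_comp_eq h4 (congrArg QHom.f4 hc))⟩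

lemma isZeroRep_or_isZeroRep {A B : QRep k} (h : (A.dsum B).IsBrick) :
    A.IsZeroRep ∨ B.IsZeroRep := by
  obtain ⟨c, hc⟩ := h (QHom.projFst A B)
  have e1 := subsingleton_of_prodMap_id_zero_eq_smul (V := A.V1) (W := B.V1)
    (congrArg QHom.f1 hc)
  have e2 := subsingleton_of_prodMap_id_zero_eq_smul (V := A.V2) (W := B.V2)
    (congrArg QHom.f2 hc)
  have e3 := subsingleton_of_prodMap_id_zero_eq_smul (V := A.V3) (W := B.V3)
    (congrArg QHom.f3 hc)
  have e4 := subsingleton_of_prodMap_id_zero_eq_smul (V := A.V4) (W := B.V4)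
    (congrArg QHom.f4 hc)
  by_cases hc1 : c = 1
  · exact Or.inr ⟨e1.1 hc1, e2.1 hc1, e3.1 hc1, e4.1 hc1⟩
  · exact Or.inl ⟨e1.2 hc1, e2.2 hc1, e3.2 hc1, e4.2 hc1⟩

lemma indecomposable {M : QRep k} (hM : M.IsBrick) (h0 : ¬ M.IsZeroRep) : M.Indecomposable :=
  ⟨h0, fun _ _ ⟨f, h1, h2, h3, h4⟩ => (hM.of_bijective f h1 h2 h3 h4).isZeroRep_or_isZeroRep⟩

end QRep.IsBrick

lemma eq_ite_of_shift_invariant {α : Type*} [Zero α] {n : ℕ} (B : Fin (n + 1) → Fin (n + 1) → α)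
    (hshift : ∀ i j : Fin n, B i.succ j.succ = B i.castSucc j.castSucc)
    (htop : ∀ j : Fin n, B 0 j.succ = 0) (hbot : ∀ j : Fin n, B (Fin.last n) j.castSucc = 0)
    (r s : Fin (n + 1)) : B r s = if r = s then B 0 0 else 0 := by
  have shift : ∀ (t : ℕ) (r s r' s' : Fin (n + 1)), (r' : ℕ) = r + t → (s' : ℕ) = s + t →
      B r' s' = B r s := by
    intro t
    induction t with
    | zero =>
      intro r s r' s' hr hs
      rw [Fin.ext hr, Fin.ext hs]
    | succ t ih =>
      intro r s r' s' hr hs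
      have er : r' = Fin.succ ⟨r + t, by omega⟩ := Fin.ext (by simp; omega)
      have es : s' = Fin.succ ⟨s + t, by omega⟩ := Fin.ext (by simp; omega)
      exact (congrArg₂ B er es).trans ((hshift _ _).trans (ih _ _ _ _ rfl rfl))
  rcases lt_trichotomy r s with hrs | rfl | hrs
  · rw [if_neg hrs.ne, ← htop ⟨s - r - 1, by omega⟩]
    exact shift r _ _ _ _ (by simp) (by simp; omega)
  · simpa using shift r 0 0 r r (by simp) (by simp)
  · rw [if_neg hrs.ne', ← hbot ⟨s + (n - r), by omega⟩]
    exact (shift (n - r) _ _ _ _ (by simp; omega) (by simp)).symm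

variable (k) in
def padRight (n : ℕ) : (Fin n → k) →ₗ[k] (Fin (n + 1) → k) where
  toFun x := Fin.snoc x 0
  map_add' x y := by ext i; induction i using Fin.lastCases <;> simp
  map_smul' c x := by ext i; induction i using Fin.lastCases <;> simp

variable (k) in
def padLeft (n : ℕ) : (Fin n → k) →ₗ[k] (Fin (n + 1) → k) where
  toFun x := Fin.cons 0 x
  map_add' x y := by ext i; induction i using Fin.cases <;> simp
  map_smul' c x := by ext i; induction i using Fin.cases <;> simp

section Pad

variable {n : ℕ}

@[simp] lemma padRight_apply_castSucc (x : Fin n → k) (i : Fin n) :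
    padRight k n x i.castSucc = x i :=
  Fin.snoc_castSucc (α := fun _ => k) ..

@[simp] lemma padRight_apply_last (x : Fin n → k) : padRight k n x (Fin.last n) = 0 :=
  Fin.snoc_last (α := fun _ => k) ..

@[simp] lemma padLeft_apply_succ (x : Fin n → k) (i : Fin n) : padLeft k n x i.succ = x i :=
  Fin.cons_succ (α := fun _ => k) 0 x i

@[simp] lemma padLeft_apply_zero (x : Fin n → k) : padLeft k n x 0 = 0 :=
  Fin.cons_zero (α := fun _ => k) 0 x

lemma padRight_injective : Function.Injective (padRight k n) :=
  fun x y h => funext fun i => by simpa using congrFun h i.castSucc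

lemma padLeft_injective : Function.Injective (padLeft k n) :=
  fun x y h => funext fun i => by simpa using congrFun h i.succ

lemma padRight_single (j : Fin n) (c : k) :
    padRight k n (Pi.single j c) = Pi.single j.castSucc c := by
  ext i
  induction i using Fin.lastCases with
  | last => simp [(Fin.castSucc_lt_last j).ne']
  | cast i => simp [Pi.single_apply]

lemma padLeft_single (j : Fin n) (c : k) :
    padLeft k n (Pi.single j c) = Pi.single j.succ c := by
  ext i
  induction i using Fin.cases with
  | zero => simp [(Fin.succ_ne_zero j).symm]
  | succ i => simp [Pi.single_apply]

lemma padRight_padLeft (x : Fin n → k) :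
    padRight k (n + 1) (padLeft k n x) = padLeft k (n + 1) (padRight k n x) :=
  (Fin.cons_snoc_eq_snoc_cons ..).symm

lemma exists_eq_smul_id_of_comp_pad_eq (φ : (Fin n → k) →ₗ[k] (Fin n → k))
    (ψ : (Fin (n + 1) → k) →ₗ[k] (Fin (n + 1) → k))
    (hR : ψ ∘ₗ padRight k n = padRight k n ∘ₗ φ) (hL : ψ ∘ₗ padLeft k n = padLeft k n ∘ₗ φ) :
    ∃ c : k, φ = c • LinearMap.id ∧ ψ = c • LinearMap.id := by
  have hR' := LinearMap.congr_fun hR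
  have hL' := LinearMap.congr_fun hL
  simp only [LinearMap.comp_apply] at hR' hL'
  set B : Fin (n + 1) → Fin (n + 1) → k := fun r s => ψ (Pi.single s 1) r
  -- both sides of the shift identity are the `(i, j)` entry of the matrix of `φ`
  have hdiag := eq_ite_of_shift_invariant B
    (fun i j => by simp [B, ← padLeft_single, ← padRight_single, hL', hR'])
    (fun j => by simp [B, ← padLeft_single, hL'])
    (fun j => by simp [B, ← padRight_single, hR'])
  have hψ : ψ = B 0 0 • LinearMap.id := by
    refine (Pi.basisFun k (Fin (n + 1))).ext fun s => funext fun r => ?_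
    rw [Pi.basisFun_apply]
    change B r s = _
    rw [hdiag r s]
    simp [Pi.single_apply, eq_comm]
  refine ⟨B 0 0, LinearMap.ext fun x => padRight_injective ?_, hψ⟩
  rw [← hR', hψ]
  simp

end Pad

variable (k) in
def padSum (n : ℕ) : (Fin n → k × k) →ₗ[k] (Fin (n + 1) → k) :=
  padRight k n ∘ₗ (LinearMap.fst k k k).compLeft (Fin n) +
    padLeft k n ∘ₗ (LinearMap.snd k k k).compLeft (Fin n)

variable (k) in
def padDiff (m : ℕ) : (Fin m → k) →ₗ[k] (Fin (m + 1) → k × k) :=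
  (LinearMap.inl k k k).compLeft (Fin (m + 1)) ∘ₗ padLeft k m -
    (LinearMap.inr k k k).compLeft (Fin (m + 1)) ∘ₗ padRight k m

section PadSum

variable {m : ℕ}

lemma padSum_apply {n : ℕ} (y : Fin n → k × k) :
    padSum k n y = padRight k n (fun i => (y i).1) + padLeft k n (fun i => (y i).2) :=
  rfl

lemma padDiff_apply (w : Fin m → k) (i : Fin (m + 1)) :
    padDiff k m w i = (padLeft k m w i, -padRight k m w i) :=
  Prod.ext (sub_zero _) (zero_sub _)

lemma padDiff_injective : Function.Injective (padDiff k m) := fun w w' h =>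
  padLeft_injective <| funext fun i => by
    simpa [padDiff_apply] using congrArg Prod.fst (congrFun h i)

lemma padSum_surjective : Function.Surjective (padSum k (m + 1)) := fun v => by
  let e : Fin (m + 1) → k := Pi.single (Fin.last m) (v (Fin.last (m + 1)))
  refine ⟨fun i => (Fin.init v i, e i), ?_⟩
  ext i
  induction i using Fin.lastCases with
  | last => simp [e, padSum_apply, padLeft_single]
  | cast i => simp [e, padSum_apply, padLeft_single, Fin.init, (Fin.castSucc_lt_last i).ne]

lemma padSum_comp_padDiff : padSum k (m + 1) ∘ₗ padDiff k m = 0 := by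
  refine LinearMap.ext fun w => ?_
  simp only [LinearMap.comp_apply, padSum_apply, padDiff_apply, LinearMap.zero_apply]
  rw [show (fun i => -padRight k m w i) = -padRight k m w from rfl, map_neg, padRight_padLeft,
    add_neg_cancel]

lemma range_padDiff_eq_ker_padSum :
    LinearMap.range (padDiff k m) = LinearMap.ker (padSum k (m + 1)) :=
  LinearMap.range_eq_ker_of_finrank_eq padDiff_injective padSum_surjective padSum_comp_padDiff
    (by simp [Module.finrank_pi_fintype, Module.finrank_prod]; ring)

end PadSum

variable (k)

def preprojective (n : ℕ) : QRep k where
  V1 := Fin n → k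
  V2 := Fin n → k
  V3 := Fin n → k
  V4 := Fin (n + 1) → k
  ma := LinearMap.id
  mb := LinearMap.id
  mc := padRight k n
  md := padLeft k n

namespace preprojective

lemma not_isZeroRep (n : ℕ) : ¬ (preprojective k n).IsZeroRep :=
  fun h => not_subsingleton (Fin (n + 1) → k) h.2.2.2

lemma isBrick (n : ℕ) : (preprojective k n).IsBrick := by
  intro f
  have h21 : f.f2 = f.f1 := f.comm_a
  have h31 : f.f3 = f.f1 := f.comm_b
  obtain ⟨c, h1, h4⟩ := exists_eq_smul_id_of_comp_pad_eq f.f1 f.f4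
    (by rw [← h21]; exact f.comm_c) (by rw [← h31]; exact f.comm_d)
  exact ⟨c, QHom.ext h1 (h21.trans h1) (h31.trans h1) h4⟩

def projCover (n : ℕ) : QHom ((P1 k).dpow n) (preprojective k n) where
  f1 := LinearMap.id
  f2 := LinearMap.id
  f3 := LinearMap.id
  f4 := padSum k n
  comm_a := rfl
  comm_b := rfl
  comm_c := LinearMap.ext fun x => by
    change padRight k n x + padLeft k n 0 = padRight k n x
    simp
  comm_d := LinearMap.ext fun x => by
    change padRight k n 0 + padLeft k n x = padLeft k n x
    simp

instance (m : ℕ) : Subsingleton ((P4 k).dpow m).V1 :=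
  inferInstanceAs (Subsingleton (Fin m → Fin 0 → k))

instance (m : ℕ) : Subsingleton ((P4 k).dpow m).V2 :=
  inferInstanceAs (Subsingleton (Fin m → Fin 0 → k))

instance (m : ℕ) : Subsingleton ((P4 k).dpow m).V3 :=
  inferInstanceAs (Subsingleton (Fin m → Fin 0 → k))

def syzygyIncl (m : ℕ) : QHom ((P4 k).dpow m) ((P1 k).dpow (m + 1)) where
  f1 := 0
  f2 := 0
  f3 := 0
  f4 := padDiff k m
  comm_a := LinearMap.ext fun x => by rw [Subsingleton.elim x 0, map_zero, map_zero]
  comm_b := LinearMap.ext fun x => by rw [Subsingleton.elim x 0, map_zero, map_zero]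
  comm_c := LinearMap.ext fun x => by rw [Subsingleton.elim x 0, map_zero, map_zero]
  comm_d := LinearMap.ext fun x => by rw [Subsingleton.elim x 0, map_zero, map_zero]

lemma shortExact (m : ℕ) : QShortExact (syzygyIncl k m) (projCover k (m + 1)) :=
  ⟨⟨Function.injective_of_subsingleton _, Function.injective_of_subsingleton _,
      Function.injective_of_subsingleton _, padDiff_injective⟩,
    ⟨Function.surjective_id, Function.surjective_id, Function.surjective_id, padSum_surjective⟩,
    ⟨LinearMap.range_zero.trans LinearMap.ker_id.symm,
      LinearMap.range_zero.trans LinearMap.ker_id.symm,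
      LinearMap.range_zero.trans LinearMap.ker_id.symm, range_padDiff_eq_ker_padSum⟩⟩

end preprojective

/-- for every `n ≥ 1` there is an indecomposable representation `M`
of `Q` with dimension vector `(n,n,n,n+1)` together with a short exact sequence
`0 → P₄ⁿ⁻¹ → P₁ⁿ → M → 0`. -/
theorem stmt12 (k : Type) [Field k] (n : ℕ) (hn : 1 ≤ n) :
    ∃ M : QRep k, M.Indecomposable ∧
      Module.finrank k M.V1 = n ∧ Module.finrank k M.V2 = n ∧
      Module.finrank k M.V3 = n ∧ Module.finrank k M.V4 = n + 1 ∧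
      ∃ (f : QHom ((P4 k).dpow (n - 1)) ((P1 k).dpow n))
        (g : QHom ((P1 k).dpow n) M), QShortExact f g := by
  obtain ⟨m, rfl⟩ := Nat.exists_eq_add_of_le' hn
  refine ⟨preprojective k (m + 1),
    (preprojective.isBrick k _).indecomposable (preprojective.not_isZeroRep k _),
    ?_, ?_, ?_, ?_, preprojective.syzygyIncl k m, preprojective.projCover k (m + 1),
    preprojective.shortExact k m⟩ <;>
  exact Module.finrank_fin_fun k
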